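/- Let f be a Schur-convex function on probability distributions on k elements, let p be a probability distribution on k elements with non-increasingly ordered entries, and let δ ≥ 0. Then the flattest δ-approximation p̲^(δ) satisfies ‖p − p̲^(δ)‖ ≤ δ and f(p̲^(δ)) ≤ f(q) for every probability distribution q with ‖q − p‖ ≤ δ; that is, the smoothed minimum f̲^(δ)(p) = min_{‖q−p‖≤δ} f(q) is attained and equals f(p̲^(δ)). -/

import Mathlib

open Finset

noncomputable section

/-- The ℓ¹ distance `‖a − b‖ = Σᵢ |aᵢ − bᵢ|` between two vectors in `ℝ^k`. -/
def l1dist {k : ℕ} (a b : Fin k → ℝ) : ℝ := ∑ i, |a i - b i|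

/-- A probability distribution on `k` elements: nonnegative entries summing to 1. -/
def IsProbDist {k : ℕ} (p : Fin k → ℝ) : Prop := (∀ i, 0 ≤ p i) ∧ ∑ i, p i = 1

/-- The vector `a` rearranged in non-increasing order, `a↓`. -/
def descSort {k : ℕ} (a : Fin k → ℝ) : Fin k → ℝ := fun i => a (Tuple.sort a i.rev)

/-- The sum of the first `l` entries of `a` (1-based indexing: entries `1,…,l`). -/
def psum {k : ℕ} (a : Fin k → ℝ) (l : ℕ) : ℝ :=
  ∑ i ∈ univ.filter (fun i : Fin k => (i : ℕ) < l), a i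

/-- The sum of the entries of `a` from position `l` to `k` (1-based indexing). -/
def tailSum {k : ℕ} (a : Fin k → ℝ) (l : ℕ) : ℝ :=
  ∑ i ∈ univ.filter (fun i : Fin k => l ≤ (i : ℕ) + 1), a i

/-- `a` majorizes `b` (`a ≻ b`): the total sums agree and all partial sums of the
non-increasing rearrangements satisfy `Σ_{i=1}^l a↓ᵢ ≥ Σ_{i=1}^l b↓ᵢ` for `l = 1,…,k`. -/
def Majorizes {k : ℕ} (a b : Fin k → ℝ) : Prop :=
  (∑ i, a i = ∑ i, b i) ∧
  ∀ l : ℕ, 1 ≤ l → l ≤ k → psum (descSort b) l ≤ psum (descSort a) l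

/-- The distribution `e₁ = (1,0,…,0)`. -/
def e1 (k : ℕ) : Fin k → ℝ := fun i => if (i : ℕ) = 0 then 1 else 0

/-- The uniform distribution `η = (1/k,…,1/k)`. -/
def unif (k : ℕ) : Fin k → ℝ := fun _ => (k : ℝ)⁻¹

/-- The unnormalised vector `r` in the construction of the steepest approximation:
`r₁ = p₁ + δ/2`, `rᵢ = pᵢ` otherwise. -/
def steepR {k : ℕ} (δ : ℝ) (p : Fin k → ℝ) : Fin k → ℝ :=
  fun i => if (i : ℕ) = 0 then p i + δ / 2 else p i

/-- `lstar ∈ {1,…,k}` is the truncation index of the steepest `δ`-approximation of `p`: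
`Σ_{i=1}^{l*} rᵢ ≤ 1 < Σ_{i=1}^{l*+1} rᵢ` (the second sum being meaningful for `l* < k`). -/
def IsTruncIdx {k : ℕ} (δ : ℝ) (p : Fin k → ℝ) (lstar : ℕ) : Prop :=
  1 ≤ lstar ∧ lstar ≤ k ∧ psum (steepR δ p) lstar ≤ 1 ∧
    (lstar < k → 1 < psum (steepR δ p) (lstar + 1))

/-- `pbar` is the steepest `δ`-approximation `p̄^(δ)` of `p` (assumed non-increasingly
ordered): if `‖p − e₁‖ ≤ δ` then `pbar = e₁`; otherwise `pbar` agrees with `r` on the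
first `l*` entries, has `1 − Σ_{i=1}^{l*} rᵢ` at position `l*+1`, and `0` afterwards. -/
def IsSteepest {k : ℕ} (δ : ℝ) (p pbar : Fin k → ℝ) : Prop :=
  (l1dist p (e1 k) ≤ δ ∧ pbar = e1 k) ∨
  (δ < l1dist p (e1 k) ∧ ∃ lstar : ℕ, IsTruncIdx δ p lstar ∧
    ∀ i : Fin k, pbar i =
      if (i : ℕ) < lstar then steepR δ p i
      else if (i : ℕ) = lstar then 1 - psum (steepR δ p) lstar
      else 0)

/-- `ε(x) = Σ_{i : pᵢ ≥ x} (pᵢ − x)`. -/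
def epsFn {k : ℕ} (p : Fin k → ℝ) (x : ℝ) : ℝ :=
  ∑ i ∈ univ.filter (fun i : Fin k => x ≤ p i), (p i - x)

/-- `γ(y) = Σ_{i : pᵢ ≤ y} (y − pᵢ)`. -/
def gammaFn {k : ℕ} (p : Fin k → ℝ) (y : ℝ) : ℝ :=
  ∑ i ∈ univ.filter (fun i : Fin k => p i ≤ y), (y - p i)

/-- `pflat` is the flattest `δ`-approximation of `p` built from the cutting level `x*` and
the filling level `y*`: `x*, y* ∈ [0,1]`, `ε(x*) = γ(y*) = δ/2`, and `pflat` equals `x*`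
where `pᵢ ≥ x*`, equals `y*` where `pᵢ ≤ y*`, and equals `pᵢ` otherwise. -/
def IsFlattestWith {k : ℕ} (δ : ℝ) (p pflat : Fin k → ℝ) (x y : ℝ) : Prop :=
  x ∈ Set.Icc (0 : ℝ) 1 ∧ y ∈ Set.Icc (0 : ℝ) 1 ∧
  epsFn p x = δ / 2 ∧ gammaFn p y = δ / 2 ∧
  ∀ i : Fin k, pflat i = if x ≤ p i then x else if p i ≤ y then y else p i

/-- `pflat` is the flattest `δ`-approximation `p̲^(δ)` of `p` (assumed non-increasingly
ordered): if `‖p − η‖ ≤ δ` then `pflat = η`; otherwise it is obtained by cutting at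
level `x*` and filling at level `y*`. -/
def IsFlattest {k : ℕ} (δ : ℝ) (p pflat : Fin k → ℝ) : Prop :=
  (l1dist p (unif k) ≤ δ ∧ pflat = unif k) ∨
  (δ < l1dist p (unif k) ∧ ∃ x y : ℝ, IsFlattestWith δ p pflat x y)

end

/-! Since `p` is sorted, `p̲^(δ)` is `p` clamped to `[y*, x*]` and is sorted as well, so `q ≻ p̲^(δ)`
amounts to comparing prefix sums. Those of `p̲^(δ)` are `l x*` up to the number `A` of cut
entries, `Σ_{i ≤ l} pᵢ − δ/2` between `A` and the number `m` of entries above `y*`, and affine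
from `m` to `k`. Any `q` within distance `δ` of `p` has top-`l` sums at least
`Σ_{i ≤ l} pᵢ − δ/2`, and top-`l` sums are concave in `l`, being the infimum over `t` of
`l t + Σᵢ (qᵢ − t)⁺`; a concave function above a piecewise affine one at the break points
`0, A, m, k` stays above it everywhere. The uniform case is the single segment `[0, k]`. -/

section PrefixSums

variable {k : ℕ}

lemma psum_zero (g : Fin k → ℝ) : psum g 0 = 0 := by
  simp [psum]

lemma psum_succ (g : Fin k → ℝ) {l : ℕ} (hl : l < k) :
    psum g (l + 1) = psum g l + g ⟨l, hl⟩ := by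
  have hins : univ.filter (fun i : Fin k => (i : ℕ) < l + 1)
      = insert ⟨l, hl⟩ (univ.filter (fun i : Fin k => (i : ℕ) < l)) := by
    ext i
    simp only [mem_filter, mem_univ, true_and, mem_insert, Fin.ext_iff]
    omega
  rw [psum, hins, sum_insert (by simp), add_comm, psum]

lemma card_filter_lt {l : ℕ} (hl : l ≤ k) : #(univ.filter fun i : Fin k => (i : ℕ) < l) = l := by
  rw [Fin.card_filter_val_lt, min_eq_right hl]

lemma psum_const (c : ℝ) {l : ℕ} (hl : l ≤ k) : psum (fun _ : Fin k => c) l = l * c := by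
  rw [psum, sum_const, card_filter_lt hl, nsmul_eq_mul]

lemma psum_self (g : Fin k → ℝ) : psum g k = ∑ i, g i := by
  rw [psum, filter_true_of_mem fun i _ => i.isLt]

lemma psum_sub_psum_congr {g h : Fin k → ℝ} {a c : ℕ} (hc : c ≤ k)
    (hgh : ∀ i : Fin k, a ≤ i → (i : ℕ) < c → g i = h i) {l : ℕ} (hal : a ≤ l) (hlc : l ≤ c) :
    psum g l - psum g a = psum h l - psum h a := by
  obtain ⟨n, rfl⟩ := Nat.exists_eq_add_of_le hal
  induction n with
  | zero => simp
  | succ n ih =>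
    have hn : a + n < k := by omega
    rw [← add_assoc, psum_succ g hn, psum_succ h hn, hgh _ (by simp) (by simp; omega)]
    linarith [ih (by omega) (by omega)]

lemma psum_sub_psum_of_const {h : Fin k → ℝ} {a c : ℕ} (hc : c ≤ k) {v : ℝ}
    (hv : ∀ i : Fin k, a ≤ i → (i : ℕ) < c → h i = v) {l : ℕ} (hal : a ≤ l) (hlc : l ≤ c) :
    psum h l - psum h a = (l - a) * v := by
  rw [psum_sub_psum_congr hc hv hal hlc, psum_const v (hlc.trans hc),
    psum_const v (hal.trans (hlc.trans hc))]
  ring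

lemma sum_le_card_mul_add_sum_posPart {ι : Type*} [Fintype ι] (g : ι → ℝ) (s : Finset ι) (t : ℝ) :
    ∑ i ∈ s, g i ≤ #s * t + ∑ i, (g i - t)⁺ :=
  calc ∑ i ∈ s, g i = #s * t + ∑ i ∈ s, (g i - t) := by
        rw [sum_sub_distrib, sum_const, nsmul_eq_mul]; ring
    _ ≤ #s * t + ∑ i ∈ s, (g i - t)⁺ := by gcongr; exact le_posPart _
    _ ≤ #s * t + ∑ i, (g i - t)⁺ := by
        grw [sum_le_univ_sum_of_nonneg fun i => posPart_nonneg (g i - t)]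

lemma psum_le_mul_add_sum_posPart (g : Fin k → ℝ) {l : ℕ} (hl : l ≤ k) (t : ℝ) :
    psum g l ≤ l * t + ∑ i, (g i - t)⁺ := by
  simpa [psum, card_filter_lt hl] using
    sum_le_card_mul_add_sum_posPart g (univ.filter fun i : Fin k => (i : ℕ) < l) t

lemma psum_eq_mul_add_sum_posPart {g : Fin k → ℝ} (hg : Antitone g) {l : ℕ} (hl0 : 0 < l)
    (hlk : l ≤ k) : psum g l = l * g ⟨l - 1, by omega⟩ + ∑ i, (g i - g ⟨l - 1, by omega⟩)⁺ := by
  set t := g ⟨l - 1, by omega⟩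
  have hhead : ∀ i ∈ univ.filter (fun i : Fin k => (i : ℕ) < l), (g i - t)⁺ = g i - t :=
    fun i hi => posPart_eq_self.2 <| sub_nonneg.2 <| hg <| Fin.mk_le_mk.2 <| by
      simp only [mem_filter] at hi; omega
  have htail : ∀ i ∈ univ.filter (fun i : Fin k => ¬ (i : ℕ) < l), (g i - t)⁺ = 0 :=
    fun i hi => posPart_eq_zero.2 <| sub_nonpos.2 <| hg <| Fin.mk_le_mk.2 <| by
      simp only [mem_filter] at hi; omega
  rw [← sum_filter_add_sum_filter_not univ (fun i : Fin k => (i : ℕ) < l), sum_congr rfl hhead,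
    sum_eq_zero htail, sum_sub_distrib, sum_const, card_filter_lt hlk, nsmul_eq_mul, psum]
  ring

lemma sum_le_psum_card {g : Fin k → ℝ} (hg : Antitone g) (s : Finset (Fin k)) :
    ∑ i ∈ s, g i ≤ psum g #s := by
  rcases Nat.eq_zero_or_pos #s with hs | hs
  · simp [card_eq_zero.1 hs, psum_zero]
  · rw [psum_eq_mul_add_sum_posPart hg hs (card_le_univ s |>.trans_eq (Fintype.card_fin k))]
    exact sum_le_card_mul_add_sum_posPart g s _

lemma psum_concave {g : Fin k → ℝ} (hg : Antitone g) {a b c : ℕ} (hab : a ≤ b) (hbc : b ≤ c)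
    (hck : c ≤ k) : (c - b : ℝ) * psum g a + (b - a) * psum g c ≤ (c - a) * psum g b := by
  rcases Nat.eq_zero_or_pos b with rfl | hb
  · obtain rfl : a = 0 := by omega
    simp
  have hcb : (0 : ℝ) ≤ c - b := sub_nonneg.2 (by exact_mod_cast hbc)
  have hba : (0 : ℝ) ≤ b - a := sub_nonneg.2 (by exact_mod_cast hab)
  set t := g ⟨b - 1, by omega⟩
  calc (c - b : ℝ) * psum g a + (b - a) * psum g c
      ≤ (c - b) * (a * t + ∑ i, (g i - t)⁺) + (b - a) * (c * t + ∑ i, (g i - t)⁺) := by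
        gcongr
        · exact psum_le_mul_add_sum_posPart g (by omega) t
        · exact psum_le_mul_add_sum_posPart g hck t
    _ = (c - a) * (b * t + ∑ i, (g i - t)⁺) := by ring
    _ = (c - a) * psum g b := by rw [psum_eq_mul_add_sum_posPart hg hb (hbc.trans hck)]

lemma psum_le_psum_of_const {g h : Fin k → ℝ} (hg : Antitone g) {a c : ℕ} (hc : c ≤ k) {v : ℝ}
    (hv : ∀ i : Fin k, a ≤ i → (i : ℕ) < c → h i = v) (hleft : psum h a ≤ psum g a)
    (hright : psum h c ≤ psum g c) {l : ℕ} (hal : a ≤ l) (hlc : l ≤ c) : psum h l ≤ psum g l := by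
  rcases eq_or_lt_of_le (hal.trans hlc) with rfl | hac
  · obtain rfl : l = a := le_antisymm hlc hal
    exact hleft
  have hstep_l := psum_sub_psum_of_const hc hv hal hlc
  have hstep_c := psum_sub_psum_of_const hc hv (hal.trans hlc) le_rfl
  have hcl : (0 : ℝ) ≤ c - l := sub_nonneg.2 (by exact_mod_cast hlc)
  have hla : (0 : ℝ) ≤ l - a := sub_nonneg.2 (by exact_mod_cast hal)
  have hscaled : (c - a : ℝ) * psum h l ≤ (c - a) * psum g l :=
    calc (c - a : ℝ) * psum h l = (c - l) * psum h a + (l - a) * psum h c := by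
          rw [eq_add_of_sub_eq hstep_l, eq_add_of_sub_eq hstep_c]; ring
      _ ≤ (c - l) * psum g a + (l - a) * psum g c := by gcongr
      _ ≤ (c - a) * psum g l := psum_concave hg hal hlc hc
  exact le_of_mul_le_mul_left hscaled (sub_pos.2 (by exact_mod_cast hac))

end PrefixSums

section Sorting

variable {k : ℕ}

lemma antitone_descSort (a : Fin k → ℝ) : Antitone (descSort a) :=
  fun _ _ hij => Tuple.monotone_sort a (Fin.rev_le_rev.2 hij)

lemma descSort_eq_self {a : Fin k → ℝ} (ha : Antitone a) : descSort a = a := by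
  have hsort : a ∘ Fin.revPerm = a ∘ Tuple.sort a :=
    Tuple.comp_sort_eq_comp_iff_monotone.2 fun i j hij => ha (Fin.rev_le_rev.2 hij)
  funext i
  simpa [descSort] using (congrFun hsort i.rev).symm

lemma sum_le_psum_descSort (a : Fin k → ℝ) (s : Finset (Fin k)) :
    ∑ i ∈ s, a i ≤ psum (descSort a) #s := by
  set σ : Equiv.Perm (Fin k) := Fin.revPerm.trans (Tuple.sort a)
  have hσ : ∀ i, descSort a (σ.symm i) = a i := fun i => congrArg a (σ.apply_symm_apply i)
  calc ∑ i ∈ s, a i = ∑ i ∈ s.map σ.symm.toEmbedding, descSort a i := by simp [hσ]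
    _ ≤ psum (descSort a) #s := by
        simpa using sum_le_psum_card (antitone_descSort a) (s.map σ.symm.toEmbedding)

lemma majorizes_of_psum_le {a b : Fin k → ℝ} (hsum : ∑ i, a i = ∑ i, b i) (hb : Antitone b)
    (h : ∀ l ≤ k, psum b l ≤ psum (descSort a) l) : Majorizes a b :=
  ⟨hsum, fun l _ hl => by rw [descSort_eq_self hb]; exact h l hl⟩

lemma sum_sub_le_half_l1dist {p q : Fin k → ℝ} (hpq : ∑ i, q i = ∑ i, p i) (s : Finset (Fin k)) :
    ∑ i ∈ s, (p i - q i) ≤ l1dist q p / 2 := by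
  have htot : ∑ i ∈ s, (p i - q i) + ∑ i ∈ sᶜ, (p i - q i) = 0 := by
    rw [sum_add_sum_compl, sum_sub_distrib, hpq, sub_self]
  have hs : ∑ i ∈ s, (p i - q i) ≤ ∑ i ∈ s, |q i - p i| :=
    sum_le_sum fun i _ => abs_sub_comm (q i) (p i) ▸ le_abs_self _
  have hsc : -∑ i ∈ sᶜ, (p i - q i) ≤ ∑ i ∈ sᶜ, |q i - p i| := by
    rw [← sum_neg_distrib]
    exact sum_le_sum fun i _ => neg_sub (p i) (q i) ▸ le_abs_self _
  have := sum_add_sum_compl s fun i => |q i - p i|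
  rw [l1dist]
  linarith

lemma psum_sub_half_l1dist_le {p q : Fin k → ℝ} (hpq : ∑ i, q i = ∑ i, p i) {l : ℕ} (hl : l ≤ k) :
    psum p l - l1dist q p / 2 ≤ psum (descSort q) l := by
  have hhalf := sum_sub_le_half_l1dist hpq (univ.filter fun i : Fin k => (i : ℕ) < l)
  have hsort := sum_le_psum_descSort q (univ.filter fun i : Fin k => (i : ℕ) < l)
  rw [sum_sub_distrib] at hhalf
  rw [card_filter_lt hl] at hsort
  rw [psum]
  linarith

end Sorting

section Levels

variable {k : ℕ}

lemma pos_of_sum_eq_one {q : Fin k → ℝ} (hq : ∑ i, q i = 1) : 0 < k :=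
  Nat.pos_of_ne_zero (by rintro rfl; simp at hq)

lemma sum_unif (hk : 0 < k) : ∑ i, unif k i = 1 := by
  simp [unif, (Nat.cast_pos.2 hk).ne']

lemma isProbDist_unif (hk : 0 < k) : IsProbDist (unif k) :=
  ⟨fun _ => inv_nonneg.2 k.cast_nonneg, sum_unif hk⟩

lemma epsFn_eq_sum_posPart (p : Fin k → ℝ) (x : ℝ) : epsFn p x = ∑ i, (p i - x)⁺ := by
  rw [epsFn, sum_filter]
  refine sum_congr rfl fun i _ => ?_
  split_ifs with h
  · exact (posPart_eq_self.2 (sub_nonneg.2 h)).symm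
  · exact (posPart_eq_zero.2 (sub_nonpos.2 (not_le.1 h).le)).symm

lemma gammaFn_eq_sum_negPart (p : Fin k → ℝ) (y : ℝ) : gammaFn p y = ∑ i, (p i - y)⁻ := by
  rw [gammaFn, sum_filter]
  refine sum_congr rfl fun i _ => ?_
  split_ifs with h
  · rw [negPart_eq_neg.2 (sub_nonpos.2 h), neg_sub]
  · exact (negPart_eq_zero.2 (sub_nonneg.2 (not_le.1 h).le)).symm

lemma antitone_epsFn (p : Fin k → ℝ) : Antitone (epsFn p) := fun x x' hx => by
  simp only [epsFn_eq_sum_posPart]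
  exact sum_le_sum fun i _ => posPart_mono (sub_le_sub_left hx _)

lemma monotone_gammaFn (p : Fin k → ℝ) : Monotone (gammaFn p) := fun y y' hy => by
  simp only [gammaFn_eq_sum_negPart]
  exact sum_le_sum fun i _ => negPart_anti (sub_le_sub_left hy _)

lemma epsFn_add_gammaFn (p : Fin k → ℝ) (c : ℝ) : epsFn p c + gammaFn p c = ∑ i, |p i - c| := by
  simp only [epsFn_eq_sum_posPart, gammaFn_eq_sum_negPart, ← sum_add_distrib, posPart_add_negPart]

lemma epsFn_sub_gammaFn (p : Fin k → ℝ) (c : ℝ) : epsFn p c - gammaFn p c = ∑ i, p i - k * c := by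
  simp only [epsFn_eq_sum_posPart, gammaFn_eq_sum_negPart, ← sum_sub_distrib, posPart_sub_negPart]
  simp [sum_sub_distrib]

lemma epsFn_inv_card_eq_gammaFn {p : Fin k → ℝ} (hp : ∑ i, p i = 1) :
    epsFn p (k : ℝ)⁻¹ = l1dist p (unif k) / 2 ∧ gammaFn p (k : ℝ)⁻¹ = l1dist p (unif k) / 2 := by
  have hsum := epsFn_add_gammaFn p (k : ℝ)⁻¹
  have hdiff := epsFn_sub_gammaFn p (k : ℝ)⁻¹
  rw [hp, mul_inv_cancel₀ (Nat.cast_pos.2 (pos_of_sum_eq_one hp)).ne', sub_self] at hdiff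
  change _ = l1dist p (unif k) at hsum
  constructor <;> linarith

end Levels

namespace IsFlattestWith

variable {k : ℕ} {δ x y : ℝ} {p pflat : Fin k → ℝ}

lemma lt_of_lt_l1dist (hp : ∑ i, p i = 1) (hδ : δ < l1dist p (unif k)) (h : IsFlattestWith δ p pflat x y) :
    y < x := by
  obtain ⟨-, -, heps, hgam, -⟩ := h
  obtain ⟨heps', hgam'⟩ := epsFn_inv_card_eq_gammaFn hp
  have hx : (k : ℝ)⁻¹ < x := lt_of_not_ge fun hx => by
    linarith [antitone_epsFn p hx]
  have hy : y < (k : ℝ)⁻¹ := lt_of_not_ge fun hy => by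
    linarith [monotone_gammaFn p hy]
  exact hy.trans hx

lemma apply_eq_max_min (hyx : y ≤ x) (h : IsFlattestWith δ p pflat x y) (i : Fin k) :
    pflat i = max y (min x (p i)) := by
  rw [h.2.2.2.2 i]
  split_ifs with h1 h2
  · rw [min_eq_left h1, max_eq_right hyx]
  · rw [min_eq_right (h2.trans hyx), max_eq_left h2]
  · rw [min_eq_right (not_le.1 h1).le, max_eq_right (not_le.1 h2).le]

lemma apply_eq_add_negPart_sub_posPart (hyx : y ≤ x) (h : IsFlattestWith δ p pflat x y)
    (i : Fin k) : pflat i = p i + (p i - y)⁻ - (p i - x)⁺ := by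
  rw [h.2.2.2.2 i]
  split_ifs with h1 h2
  · rw [negPart_eq_zero.2 (by linarith), posPart_eq_self.2 (by linarith)]; ring
  · rw [negPart_eq_neg.2 (by linarith), posPart_eq_zero.2 (by linarith)]; ring
  · rw [negPart_eq_zero.2 (by linarith), posPart_eq_zero.2 (by linarith)]; ring

lemma abs_sub_apply (hyx : y ≤ x) (h : IsFlattestWith δ p pflat x y) (i : Fin k) :
    |p i - pflat i| = (p i - y)⁻ + (p i - x)⁺ := by
  rw [h.2.2.2.2 i]
  split_ifs with h1 h2
  · rw [negPart_eq_zero.2 (by linarith), posPart_eq_self.2 (by linarith),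
      abs_of_nonneg (by linarith)]; ring
  · rw [negPart_eq_neg.2 (by linarith), posPart_eq_zero.2 (by linarith),
      abs_of_nonpos (by linarith)]; ring
  · rw [negPart_eq_zero.2 (by linarith), posPart_eq_zero.2 (by linarith)]; simp

lemma isProbDist (hp : ∑ i, p i = 1) (hyx : y ≤ x) (h : IsFlattestWith δ p pflat x y) :
    IsProbDist pflat := by
  refine ⟨fun i => h.2.1.1.trans ?_, ?_⟩
  · rw [h.apply_eq_max_min hyx i]
    exact le_max_left _ _
  · simp only [h.apply_eq_add_negPart_sub_posPart hyx, sum_sub_distrib, sum_add_distrib,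
      ← epsFn_eq_sum_posPart, ← gammaFn_eq_sum_negPart, h.2.2.1, h.2.2.2.1, hp]
    ring

lemma l1dist_eq (hyx : y ≤ x) (h : IsFlattestWith δ p pflat x y) : l1dist p pflat = δ := by
  simp only [l1dist, h.abs_sub_apply hyx, sum_add_distrib, ← epsFn_eq_sum_posPart,
    ← gammaFn_eq_sum_negPart, h.2.2.1, h.2.2.2.1]
  ring

lemma antitone (hord : Antitone p) (hyx : y ≤ x) (h : IsFlattestWith δ p pflat x y) :
    Antitone pflat := fun i j hij => by
  simp only [h.apply_eq_max_min hyx]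
  exact max_le_max le_rfl (min_le_min le_rfl (hord hij))

lemma exists_cut_fill_indices (hord : Antitone p) (hyx : y < x)
    (h : IsFlattestWith δ p pflat x y) :
    ∃ A m : ℕ, A ≤ m ∧ m ≤ k ∧ (∀ i : Fin k, (i : ℕ) < A → pflat i = x) ∧
      (∀ i : Fin k, m ≤ (i : ℕ) → pflat i = y) ∧
      ∀ l, A ≤ l → l ≤ m → psum pflat l = psum p l - δ / 2 := by
  obtain ⟨-, -, heps, -, hform⟩ := h
  set A := #(univ.filter fun i : Fin k => x ≤ p i)
  set m := #(univ.filter fun i : Fin k => y < p i)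
  have hA : ∀ i : Fin k, x ≤ p i ↔ (i : ℕ) < A := fun i =>
    (Fin.lt_card_filter_univ_iff_apply_of_imp (fun i => x ≤ p i)
      fun _ _ hji hi => hi.trans (hord hji)).symm
  have hm : ∀ i : Fin k, y < p i ↔ (i : ℕ) < m := fun i =>
    (Fin.lt_card_filter_univ_iff_apply_of_imp (fun i => y < p i)
      fun _ _ hji hi => hi.trans_le (hord hji)).symm
  have hAm : A ≤ m := card_le_card (monotone_filter_right _ fun _ _ hi => hyx.trans_le hi)
  have hmk : m ≤ k := (card_le_univ _).trans_eq (Fintype.card_fin k)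
  have hcut : ∀ i : Fin k, (i : ℕ) < A → pflat i = x := fun i hi => by
    rw [hform, if_pos ((hA i).2 hi)]
  have hkeep : ∀ i : Fin k, A ≤ (i : ℕ) → (i : ℕ) < m → pflat i = p i := fun i hi hi' => by
    rw [hform, if_neg (mt (hA i).1 (by omega)), if_neg (not_le.2 ((hm i).2 hi'))]
  have hfill : ∀ i : Fin k, m ≤ (i : ℕ) → pflat i = y := fun i hi => by
    have hpy : p i ≤ y := not_lt.1 (mt (hm i).1 (by omega))
    rw [hform, if_neg (not_le.2 (hpy.trans_lt hyx)), if_pos hpy]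
  have hpA : psum p A = A * x + δ / 2 := by
    have hS : univ.filter (fun i : Fin k => x ≤ p i) = univ.filter fun i : Fin k => (i : ℕ) < A :=
      filter_congr fun i _ => hA i
    rw [epsFn, hS, sum_sub_distrib, sum_const, card_filter_lt (hAm.trans hmk), nsmul_eq_mul] at heps
    rw [psum]
    linarith
  refine ⟨A, m, hAm, hmk, hcut, hfill, fun l hAl hlm => ?_⟩
  have hkeepSum := psum_sub_psum_congr hmk hkeep hAl hlm
  have hcutSum := psum_sub_psum_of_const (hAm.trans hmk) (fun i _ => hcut i) (Nat.zero_le A) le_rfl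
  rw [psum_zero, Nat.cast_zero] at hcutSum
  linarith

lemma psum_le_psum_descSort (hp : ∑ i, p i = 1) (hord : Antitone p) (hyx : y < x)
    (h : IsFlattestWith δ p pflat x y) {q : Fin k → ℝ} (hq : ∑ i, q i = 1)
    (hqp : l1dist q p ≤ δ) {l : ℕ} (hl : l ≤ k) : psum pflat l ≤ psum (descSort q) l := by
  obtain ⟨A, m, hAm, hmk, hcut, hfill, hmid⟩ := h.exists_cut_fill_indices hord hyx
  have hbound : ∀ l ≤ k, psum p l - δ / 2 ≤ psum (descSort q) l := fun l hl =>
    (psum_sub_half_l1dist_le (hq.trans hp.symm) hl).trans' (by linarith)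
  rcases le_total l A with hlA | hAl
  · refine psum_le_psum_of_const (antitone_descSort q) (hAm.trans hmk) (fun i _ => hcut i) ?_ ?_
      (Nat.zero_le l) hlA
    · simp [psum_zero]
    · exact hmid A le_rfl hAm ▸ hbound A (hAm.trans hmk)
  rcases le_total l m with hlm | hml
  · exact hmid l hAl hlm ▸ hbound l hl
  refine psum_le_psum_of_const (antitone_descSort q) le_rfl (fun i hi _ => hfill i hi) ?_ ?_ hml hl
  · exact hmid m hAm le_rfl ▸ hbound m hmk
  · rw [psum_self, (h.isProbDist hp hyx.le).2, ← hq]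
    simpa using sum_le_psum_descSort q univ

lemma majorizes (hp : ∑ i, p i = 1) (hord : Antitone p) (hyx : y < x)
    (h : IsFlattestWith δ p pflat x y) {q : Fin k → ℝ} (hq : ∑ i, q i = 1)
    (hqp : l1dist q p ≤ δ) : Majorizes q pflat :=
  majorizes_of_psum_le (by rw [hq, (h.isProbDist hp hyx.le).2]) (h.antitone hord hyx.le)
    fun _ hl => h.psum_le_psum_descSort hp hord hyx hq hqp hl

end IsFlattestWith

lemma majorizes_unif {k : ℕ} {q : Fin k → ℝ} (hq : ∑ i, q i = 1) : Majorizes q (unif k) := by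
  have hu := sum_unif (pos_of_sum_eq_one hq)
  refine majorizes_of_psum_le (hq.trans hu.symm) (fun _ _ _ => le_rfl) fun l hl => ?_
  refine psum_le_psum_of_const (antitone_descSort q) le_rfl (v := (k : ℝ)⁻¹)
    (fun _ _ _ => rfl) ?_ ?_ (Nat.zero_le l) hl
  · simp [psum_zero]
  · rw [psum_self]
    change ∑ i, unif k i ≤ _
    rw [hu, ← hq]
    simpa using sum_le_psum_descSort q univ

theorem schurConvex_smooth_min_general {k : ℕ} (f : (Fin k → ℝ) → ℝ)
    (hf : ∀ a b : Fin k → ℝ, IsProbDist a → IsProbDist b → Majorizes a b → f b ≤ f a)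
    (δ : ℝ)
    (p : Fin k → ℝ) (hp : IsProbDist p) (hord : Antitone p)
    (pflat : Fin k → ℝ) (hpflat : IsFlattest δ p pflat) :
    IsProbDist pflat ∧ l1dist p pflat ≤ δ ∧
      ∀ q : Fin k → ℝ, IsProbDist q → l1dist q p ≤ δ → f pflat ≤ f q := by
  rcases hpflat with ⟨hdist, rfl⟩ | ⟨hδ, x, y, hflat⟩
  · have hunif := isProbDist_unif (pos_of_sum_eq_one hp.2)
    exact ⟨hunif, hdist, fun q hq _ => hf q _ hq hunif (majorizes_unif hq.2)⟩
  · have hyx := hflat.lt_of_lt_l1dist hp.2 hδ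
    have hPD := hflat.isProbDist hp.2 hyx.le
    exact ⟨hPD, (hflat.l1dist_eq hyx.le).le,
      fun q hq hqp => hf q _ hq hPD (hflat.majorizes hp.2 hord hyx hq.2 hqp)⟩

/-- for a Schur-convex `f`, the smoothed minimum
`f̲^(δ)(p) = min_{‖q−p‖≤δ} f(q)` is attained at the flattest `δ`-approximation `p̲^(δ)`. -/
theorem schurConvex_smooth_min {k : ℕ} (f : (Fin k → ℝ) → ℝ)
    (hf : ∀ a b : Fin k → ℝ, IsProbDist a → IsProbDist b → Majorizes a b → f b ≤ f a)
    (δ : ℝ) (hδ : 0 ≤ δ)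
    (p : Fin k → ℝ) (hp : IsProbDist p) (hord : Antitone p)
    (pflat : Fin k → ℝ) (hpflat : IsFlattest δ p pflat) :
    IsProbDist pflat ∧ l1dist p pflat ≤ δ ∧
      ∀ q : Fin k → ℝ, IsProbDist q → l1dist q p ≤ δ → f pflat ≤ f q :=
  schurConvex_smooth_min_general f hf δ p hp hord pflat hpflat
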